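/- Let G = K × H be a direct product of finite groups with coprime orders such that γ(K) ≥ γ(H) and α(K) = γ(K). Then α(G) = γ(G). -/

import Mathlib

/-- A subset `D` of a group `G` is a determining set if the only automorphism of `G`
fixing every element of `D` is the identity. -/
def IsDetermining {G : Type*} [Group G] (D : Set G) : Prop :=
  ∀ φ : G ≃* G, (∀ x ∈ D, φ x = x) → φ = MulEquiv.refl G

/-- The determining number: the minimum size of a (finite) determining set. -/
noncomputable def detNumber (G : Type*) [Group G] : ℕ :=
  sInf {n | ∃ D : Finset G, D.card = n ∧ IsDetermining (D : Set G)}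

/-- The generating number: the minimum size of a (finite) generating set. -/
noncomputable def genNumber (G : Type*) [Group G] : ℕ :=
  sInf {n | ∃ D : Finset G, D.card = n ∧ Subgroup.closure (D : Set G) = ⊤}

/-!
Every generating set is determining, so `α G ≤ γ G` always holds. Conversely, the projection
to `K` of a determining set of `K × H` is determining for `K`, so
`γ (K × H) ≤ max (γ K) (γ H) = γ K = α K ≤ α (K × H)`. For the first inequality,
pairing generators of `K` with generators of `H` (padding the shorter list) gives a subgroup
projecting onto both factors, and since the orders are coprime, suitable powers of its
elements kill either component while fixing the other, so the subgroup is everything.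
-/

open Subgroup

section Numbers

variable {G : Type*} [Group G]

theorem IsDetermining.of_closure_eq_top {D : Set G} (hD : closure D = ⊤) : IsDetermining D :=
  fun _ hφ => MulEquiv.toMonoidHom_injective <| MonoidHom.eq_of_eqOn_dense hD hφ

theorem genNumber_le {D : Finset G} (hD : closure (D : Set G) = ⊤) : genNumber G ≤ D.card :=
  Nat.sInf_le ⟨D, rfl, hD⟩

theorem detNumber_le {D : Finset G} (hD : IsDetermining (D : Set G)) : detNumber G ≤ D.card :=
  Nat.sInf_le ⟨D, rfl, hD⟩

variable (G) [Finite G]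

theorem exists_finset_card_eq_genNumber :
    ∃ D : Finset G, D.card = genNumber G ∧ closure (D : Set G) = ⊤ := by
  have := Fintype.ofFinite G
  exact Nat.sInf_mem (s := {n | ∃ D : Finset G, D.card = n ∧ closure (D : Set G) = ⊤})
    ⟨_, Finset.univ, rfl, by simp⟩

theorem exists_finset_card_eq_detNumber :
    ∃ D : Finset G, D.card = detNumber G ∧ IsDetermining (D : Set G) := by
  obtain ⟨D, -, hD⟩ := exists_finset_card_eq_genNumber G
  exact Nat.sInf_mem (s := {n | ∃ D : Finset G, D.card = n ∧ IsDetermining (D : Set G)})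
    ⟨_, D, rfl, .of_closure_eq_top hD⟩

theorem detNumber_le_genNumber : detNumber G ≤ genNumber G := by
  obtain ⟨D, hcard, hD⟩ := exists_finset_card_eq_genNumber G
  exact hcard ▸ detNumber_le (.of_closure_eq_top hD)

end Numbers

theorem IsDetermining.image_fst {K H : Type*} [Group K] [Group H] {D : Set (K × H)}
    (hD : IsDetermining D) : IsDetermining (Prod.fst '' D) := by
  intro φ hφ
  have hprod : φ.prodCongr (MulEquiv.refl H) = MulEquiv.refl (K × H) :=
    hD _ fun x hx => Prod.ext (hφ x.1 ⟨x, hx, rfl⟩) rfl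
  exact MulEquiv.ext fun k => congrArg Prod.fst (DFunLike.congr_fun hprod (k, 1))

theorem detNumber_le_detNumber_prod (K H : Type*) [Group K] [Group H] [Finite K] [Finite H] :
    detNumber K ≤ detNumber (K × H) := by
  classical
  obtain ⟨D, hcard, hD⟩ := exists_finset_card_eq_detNumber (K × H)
  have hfst : IsDetermining ((D.image Prod.fst : Finset K) : Set K) := by
    simpa using hD.image_fst
  calc detNumber K ≤ (D.image Prod.fst).card := detNumber_le hfst
    _ ≤ D.card := Finset.card_image_le
    _ = detNumber (K × H) := hcard

theorem exists_pow_eq_self_and_pow_eq_one {A B : Type*} [Group A] [Group B] [Finite A]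
    [Finite B] (hcop : (Nat.card A).Coprime (Nat.card B)) :
    ∃ n : ℕ, (∀ a : A, a ^ n = a) ∧ ∀ b : B, b ^ n = 1 := by
  refine ⟨Nat.card B ^ (Nat.card A).totient, fun a => ?_, fun b => ?_⟩
  · have hmod : Nat.card B ^ (Nat.card A).totient ≡ 1 [MOD orderOf a] :=
      (Nat.ModEq.pow_totient hcop.symm).of_dvd (orderOf_dvd_natCard a)
    simpa using pow_eq_pow_iff_modEq.mpr hmod
  · exact orderOf_dvd_iff_pow_eq_one.mp <| (orderOf_dvd_natCard b).trans <|
      dvd_pow_self _ (Nat.totient_pos.mpr Nat.card_pos).ne'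

theorem Subgroup.eq_top_of_map_fst_eq_top_of_map_snd_eq_top {K H : Type*} [Group K] [Group H]
    [Finite K] [Finite H] (hcop : (Nat.card K).Coprime (Nat.card H)) {S : Subgroup (K × H)}
    (hK : S.map (MonoidHom.fst K H) = ⊤) (hH : S.map (MonoidHom.snd K H) = ⊤) : S = ⊤ := by
  obtain ⟨m, hmK, hmH⟩ := exists_pow_eq_self_and_pow_eq_one hcop
  obtain ⟨n, hnH, hnK⟩ := exists_pow_eq_self_and_pow_eq_one hcop.symm
  refine eq_top_iff.mpr fun ⟨k, h⟩ _ => ?_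
  obtain ⟨x, hx, rfl⟩ := mem_map.mp (hK ▸ mem_top k)
  obtain ⟨y, hy, rfl⟩ := mem_map.mp (hH ▸ mem_top h)
  have hxy : x ^ m * y ^ n = (x.1, y.2) := by ext <;> simp [hmK, hmH, hnH, hnK]
  simpa [hxy] using mul_mem (pow_mem hx m) (pow_mem hy n)

theorem Finset.exists_card_le_max_subset_image_fst_snd {α β : Type*} [Nonempty α]
    [Nonempty β] (s : Finset α) (t : Finset β) :
    ∃ D : Finset (α × β), D.card ≤ max s.card t.card ∧
      (s : Set α) ⊆ Prod.fst '' (D : Set (α × β)) ∧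
      (t : Set β) ⊆ Prod.snd '' (D : Set (α × β)) := by
  classical
  set m := max s.card t.card
  let l₁ := s.toList ++ List.replicate (m - s.card) (Classical.arbitrary α)
  let l₂ := t.toList ++ List.replicate (m - t.card) (Classical.arbitrary β)
  have hlen₁ : l₁.length = m := by simp [l₁]; omega
  have hlen₂ : l₂.length = m := by simp [l₂]; omega
  refine ⟨(l₁.zip l₂).toFinset, ?_, fun a ha => ?_, fun b hb => ?_⟩
  · calc _ ≤ (l₁.zip l₂).length := List.toFinset_card_le _
      _ = m := by simp [hlen₁, hlen₂]
  · have : a ∈ (l₁.zip l₂).map Prod.fst := by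
      rw [List.map_fst_zip (by omega)]
      simp_all [l₁]
    obtain ⟨p, hp, rfl⟩ := List.mem_map.mp this
    exact ⟨p, by simpa using hp, rfl⟩
  · have : b ∈ (l₁.zip l₂).map Prod.snd := by
      rw [List.map_snd_zip (by omega)]
      simp_all [l₂]
    obtain ⟨p, hp, rfl⟩ := List.mem_map.mp this
    exact ⟨p, by simpa using hp, rfl⟩

theorem genNumber_prod_le_max {K H : Type*} [Group K] [Group H] [Finite K] [Finite H]
    (hcop : (Nat.card K).Coprime (Nat.card H)) :
    genNumber (K × H) ≤ max (genNumber K) (genNumber H) := by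
  obtain ⟨DK, hcardK, hDK⟩ := exists_finset_card_eq_genNumber K
  obtain ⟨DH, hcardH, hDH⟩ := exists_finset_card_eq_genNumber H
  obtain ⟨D, hcard, hK, hH⟩ := Finset.exists_card_le_max_subset_image_fst_snd DK DH
  have hfst : (closure (D : Set (K × H))).map (MonoidHom.fst K H) = ⊤ := by
    rw [MonoidHom.map_closure, eq_top_iff, ← hDK]
    exact closure_mono hK
  have hsnd : (closure (D : Set (K × H))).map (MonoidHom.snd K H) = ⊤ := by
    rw [MonoidHom.map_closure, eq_top_iff, ← hDH]
    exact closure_mono hH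
  calc genNumber (K × H) ≤ D.card :=
        genNumber_le (eq_top_of_map_fst_eq_top_of_map_snd_eq_top hcop hfst hsnd)
    _ ≤ max (genNumber K) (genNumber H) := hcardK ▸ hcardH ▸ hcard

theorem stmt18 {K H : Type*} [Group K] [Group H] [Finite K] [Finite H]
    (hcop : Nat.Coprime (Nat.card K) (Nat.card H))
    (hge : genNumber H ≤ genNumber K) (hK : detNumber K = genNumber K) :
    detNumber (K × H) = genNumber (K × H) := by
  refine le_antisymm (detNumber_le_genNumber _) ?_
  calc genNumber (K × H) ≤ max (genNumber K) (genNumber H) := genNumber_prod_le_max hcop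
    _ = detNumber K := by rw [max_eq_left hge, hK]
    _ ≤ detNumber (K × H) := detNumber_le_detNumber_prod K H
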